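/- arXiv:math/0601681 — 3 statements merged into one kernel-verified Lean document; each statement's English description precedes it below -/
import Mathlib

section
/- Let n ≥ 2 and fix i ≠ j with 1 ≤ i, j ≤ n. Let w be the permutation of {1,…,n} with w(i) = 1, w(j) = n, and whose values at the remaining positions, read in increasing order of position, are n−1, n−2, …, 2 in decreasing order. Then w is the largest permutation in the Bruhat order satisfying w(i) = 1 and w(j) = n; that is, every permutation v of {1,…,n} with v(i) = 1 and v(j) = n satisfies v ≤ w. -/
/-!
Every `v` agreeing with `w` at positions `i` and `j` and different from `w` has two positions
`a < b` outside `{i, j}` with `v a < v b`, because `w` is the only permutation with these two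
values that is decreasing off `{i, j}`. Right multiplication by the transposition `(a b)` then
goes up in the Bruhat order and strictly raises the length: it is a cover when no value of `v`
lies strictly between `v a` and `v b` at a position between `a` and `b`, and otherwise, for such
a position `c`, `(a b) = (a c)(c b)(a c)` splits it into three ascents across shorter intervals.
Since `v · (a b)` still agrees with `w` at `i` and `j`, induction on `n² - ℓ(v)` ends at `w`.
-/

open Matrix

noncomputable section

/-- The length of a permutation: its number of inversions. -/
def invLen {n : ℕ} (w : Equiv.Perm (Fin n)) : ℕ :=
  (Finset.univ.filter (fun p : Fin n × Fin n => p.1 < p.2 ∧ w p.2 < w p.1)).card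

def IsTransposition {n : ℕ} (t : Equiv.Perm (Fin n)) : Prop :=
  ∃ a b : Fin n, a ≠ b ∧ t = Equiv.swap a b

/-- `BruhatCovers w v` means `w` covers `v` in the Bruhat order:
`v = w·t` for some transposition `t` and `ℓ(v) = ℓ(w) − 1`. -/
def BruhatCovers {n : ℕ} (w v : Equiv.Perm (Fin n)) : Prop :=
  (∃ t, IsTransposition t ∧ v = w * t) ∧ invLen v + 1 = invLen w

/-- The Bruhat order: reflexive–transitive closure of the covering relation. -/
def BruhatLE {n : ℕ} (v w : Equiv.Perm (Fin n)) : Prop :=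
  Relation.ReflTransGen (fun x y => BruhatCovers y x) v w

def BruhatLT {n : ℕ} (v w : Equiv.Perm (Fin n)) : Prop :=
  BruhatLE v w ∧ v ≠ w

/-- The matrix unit `E_{kl}`. -/
def stdE (n : ℕ) (k l : Fin n) : Matrix (Fin n) (Fin n) ℂ := Matrix.single k l 1

/-- The permutation matrix of `σ`: entry `(k,l)` is `1` iff `k = σ(l)`. -/
def permMat {n : ℕ} (σ : Equiv.Perm (Fin n)) : Matrix (Fin n) (Fin n) ℂ :=
  Matrix.of fun k l => if k = σ l then 1 else 0

/-- The Hessenberg space of a (1-based) Hessenberg function `h`: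
matrices `M` with `M_{kl} = 0` whenever `k > h(l)`.  Row index `k : Fin n`
corresponds to the 1-based row `(k : ℕ) + 1`. -/
def HessSpace {n : ℕ} (h : Fin n → ℕ) : Set (Matrix (Fin n) (Fin n) ℂ) :=
  {M | ∀ k l : Fin n, h l < (k : ℕ) + 1 → M k l = 0}

/-- The span `H_{ij}` of the matrix units `E_{kl}` with `k ≤ i` and `l ≥ j`
(`i`, `j`, `k`, `l` all 1-based): matrices vanishing outside the
upper-right `i × (n−j+1)` rectangle. -/
def Hrect (n i j : ℕ) : Set (Matrix (Fin n) (Fin n) ℂ) :=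
  {M | ∀ k l : Fin n, ¬((k : ℕ) + 1 ≤ i ∧ j ≤ (l : ℕ) + 1) → M k l = 0}

open Equiv Finset

theorem Equiv.eq_of_eqOn_of_strictAntiOn_compl {α β : Type*} [LinearOrder α] [WellFoundedGT α]
    [Preorder β] {v w : α ≃ β} {F : Set α} (hv : StrictAntiOn v Fᶜ) (hw : StrictAntiOn w Fᶜ)
    (h : Set.EqOn v w F) : v = w := by
  have hrange : Set.range (fun p : ↥Fᶜ => v p) = Set.range (fun p : ↥Fᶜ => w p) := by
    rw [← Set.image_eq_range, ← Set.image_eq_range, v.image_compl, w.image_compl, h.image_eq]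
  have hvw := ((Set.strictAntiOn_iff_strictAnti.mp hv).range_inj
    (Set.strictAntiOn_iff_strictAnti.mp hw)).mp hrange
  ext p
  by_cases hp : p ∈ F
  · exact h hp
  · exact congrFun hvw ⟨p, hp⟩

variable {n : ℕ}

def inversions (x : Perm (Fin n)) : Finset (Fin n × Fin n) :=
  univ.filter fun p => p.1 < p.2 ∧ x p.2 < x p.1

theorem invLen_eq_card_inversions (x : Perm (Fin n)) : invLen x = #(inversions x) := rfl

theorem invLen_le_card (x : Perm (Fin n)) : invLen x ≤ Fintype.card (Fin n × Fin n) :=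
  card_filter_le _ _

/-- On increasing pairs, an involution carrying the inversions of `x * swap a b` onto those of `x`
together with `(a, b)`, when `x a < x b` and no value of `x` strictly between lies between `a`
and `b`. -/
def swapPair (a b : Fin n) (p : Fin n × Fin n) : Fin n × Fin n :=
  if swap a b p.1 < swap a b p.2 then (swap a b p.1, swap a b p.2) else p

theorem swapPair_fst_lt (a b : Fin n) {p : Fin n × Fin n} (hp : p.1 < p.2) :
    (swapPair a b p).1 < (swapPair a b p).2 := by
  unfold swapPair
  split_ifs <;> assumption

theorem swapPair_swapPair (a b : Fin n) {p : Fin n × Fin n} (hp : p.1 < p.2) :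
    swapPair a b (swapPair a b p) = p := by
  unfold swapPair
  split_ifs <;> simp_all

theorem fst_lt_of_mem_inversions {x : Perm (Fin n)} {p : Fin n × Fin n}
    (hp : p ∈ inversions x) : p.1 < p.2 :=
  (mem_filter.mp hp).2.1

section Cover

variable {x : Perm (Fin n)} {a b : Fin n} (hab : a < b) (hx : x a < x b)
  (hmid : ∀ c, a < c → c < b → ¬(x a < x c ∧ x c < x b))
include hab hx hmid

theorem mem_inversions_mul_swap_iff {p : Fin n × Fin n} (hp : p.1 < p.2) :
    p ∈ inversions (x * swap a b) ↔ swapPair a b p ∈ insert (a, b) (inversions x) := by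
  obtain ⟨p, q⟩ := p
  have := hmid p
  have := hmid q
  have := x.injective
  simp only [inversions, swapPair, swap_apply_def, mem_insert, mem_filter, mem_univ, true_and,
    Perm.mul_apply] at *
  grind

theorem invLen_mul_swap_of_cover : invLen (x * swap a b) = invLen x + 1 := by
  have hnotMem : (a, b) ∉ inversions x := by simp [inversions, hx.le]
  have hlt : ∀ p ∈ insert (a, b) (inversions x), p.1 < p.2 := by
    simpa only [mem_insert, forall_eq_or_imp] using ⟨hab, fun p => fst_lt_of_mem_inversions⟩
  rw [invLen_eq_card_inversions, invLen_eq_card_inversions, ← card_insert_of_notMem hnotMem]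
  refine card_nbij' (swapPair a b) (swapPair a b) (fun p hp => ?_) (fun p hp => ?_)
    (fun p hp => swapPair_swapPair a b (fst_lt_of_mem_inversions hp))
    (fun p hp => swapPair_swapPair a b (hlt p hp))
  · exact (mem_inversions_mul_swap_iff hab hx hmid (fst_lt_of_mem_inversions hp)).mp hp
  · refine (mem_inversions_mul_swap_iff hab hx hmid (swapPair_fst_lt a b (hlt p hp))).mpr ?_
    rwa [swapPair_swapPair a b (hlt p hp)]

theorem bruhatCovers_mul_swap : BruhatCovers (x * swap a b) x :=
  ⟨⟨swap a b, ⟨a, b, hab.ne, rfl⟩, by rw [mul_assoc, Equiv.swap_mul_self, mul_one]⟩,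
    (invLen_mul_swap_of_cover hab hx hmid).symm⟩

end Cover

theorem BruhatLE.trans {u v w : Perm (Fin n)} (huv : BruhatLE u v) (hvw : BruhatLE v w) :
    BruhatLE u w :=
  Relation.ReflTransGen.trans huv hvw

theorem BruhatLE.invLen_lt {u v : Perm (Fin n)} (h : BruhatLE u v) (hne : u ≠ v) :
    invLen u < invLen v := by
  induction h with
  | refl => exact absurd rfl hne
  | @tail c d _ hcd ih =>
    rw [← hcd.2]
    by_cases hu : u = c
    · subst hu
      exact Nat.lt_succ_self _
    · exact Nat.lt_succ_of_lt (ih hu)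

theorem bruhatLE_mul_swap {x : Perm (Fin n)} {a b : Fin n} (hab : a < b) (hx : x a < x b) :
    BruhatLE x (x * swap a b) := by
  by_cases hmid : ∀ c, a < c → c < b → ¬(x a < x c ∧ x c < x b)
  · exact .single (bruhatCovers_mul_swap hab hx hmid)
  push Not at hmid
  obtain ⟨c, hac, hcb, hxac, hxcb⟩ := hmid
  have h₁ : BruhatLE x (x * swap a c) := bruhatLE_mul_swap hac hxac
  have h₂ : BruhatLE (x * swap a c) (x * swap a c * swap c b) :=
    bruhatLE_mul_swap hcb (by simpa [swap_apply_of_ne_of_ne hab.ne' hcb.ne'] using hx)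
  have h₃ : BruhatLE (x * swap a c * swap c b) (x * swap a c * swap c b * swap a c) :=
    bruhatLE_mul_swap hac
      (by simpa [swap_apply_of_ne_of_ne hac.ne hab.ne, swap_apply_of_ne_of_ne hab.ne' hcb.ne']
        using hxcb)
  have hconj : swap a c * swap c b * swap a c = swap a b := by
    rw [swap_comm a c, ← swap_comm b c, swap_mul_swap_mul_swap hcb.ne' hab.ne']
  rw [mul_assoc, mul_assoc, hconj] at h₃
  exact (h₁.trans h₂).trans h₃
termination_by (b : ℕ) - a
decreasing_by all_goals simp only [Fin.lt_def] at *; omega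

theorem bruhatLE_of_eqOn_of_strictAntiOn_compl {F : Set (Fin n)} {w : Perm (Fin n)}
    (hw : StrictAntiOn w Fᶜ) (v : Perm (Fin n)) (hv : Set.EqOn v w F) : BruhatLE v w := by
  by_cases hvw : v = w
  · exact hvw ▸ .refl
  obtain ⟨a, ha, b, hb, hab, hvab⟩ : ∃ a ∈ Fᶜ, ∃ b ∈ Fᶜ, a < b ∧ v a < v b := by
    by_contra! hanti
    refine hvw (eq_of_eqOn_of_strictAntiOn_compl (fun a ha b hb hab => ?_) hw hv)
    exact (hanti a ha b hb hab).lt_of_ne (v.injective.ne hab.ne')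
  have hle := bruhatLE_mul_swap hab hvab
  have hlt : invLen v < invLen (v * swap a b) :=
    hle.invLen_lt fun h => hab.ne (mul_eq_left.mp h.symm |> swap_eq_one_iff.mp)
  have hagree : Set.EqOn (v * swap a b) w F := fun p hp => by
    rw [Perm.mul_apply,
      swap_apply_of_ne_of_ne (ne_of_mem_of_not_mem hp ha) (ne_of_mem_of_not_mem hp hb), hv hp]
  exact hle.trans (bruhatLE_of_eqOn_of_strictAntiOn_compl hw _ hagree)
termination_by Fintype.card (Fin n × Fin n) - invLen v
decreasing_by
  have := invLen_le_card (v * swap a b)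
  omega

/-- `w` (the permutation with `w(i)=1`, `w(j)=n` and remaining values
`n−1,…,2` in decreasing order) is the largest permutation in the Bruhat order with
`w(i) = 1` and `w(j) = n`: every `v` with `v(i) = 1`, `v(j) = n` satisfies `v ≤ w`. -/
theorem stmt7 (n : ℕ) (i j : ℕ) (hi1 : 1 ≤ i) (hin : i ≤ n)
    (hj1 : 1 ≤ j) (hjn : j ≤ n) (w : Equiv.Perm (Fin n))
    (hwi : w ⟨i - 1, by omega⟩ = ⟨0, by omega⟩)
    (hwj : w ⟨j - 1, by omega⟩ = ⟨n - 1, by omega⟩)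
    (hdec : ∀ p q : Fin n, p ≠ ⟨i - 1, by omega⟩ → p ≠ ⟨j - 1, by omega⟩ →
      q ≠ ⟨i - 1, by omega⟩ → q ≠ ⟨j - 1, by omega⟩ → p < q → w q < w p) :
    ∀ v : Equiv.Perm (Fin n),
      v ⟨i - 1, by omega⟩ = ⟨0, by omega⟩ → v ⟨j - 1, by omega⟩ = ⟨n - 1, by omega⟩ →
        BruhatLE v w := by
  intro v hvi hvj
  refine bruhatLE_of_eqOn_of_strictAntiOn_compl
    (F := {⟨i - 1, by omega⟩, ⟨j - 1, by omega⟩}) (fun p hp q hq hpq => ?_) v ?_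
  · simp only [Set.mem_compl_iff, Set.mem_insert_iff, Set.mem_singleton_iff, not_or] at hp hq
    exact hdec p q hp.1 hp.2 hq.1 hq.2 hpq
  · rintro p (rfl | rfl)
    exacts [hvi.trans hwi.symm, hvj.trans hwj.symm]
end
end

section
/- Let n ≥ 2 and fix pairs (i,j) and (i′,j′) with 1 ≤ i, j, i′, j′ ≤ n, i ≠ j, and i′ ≠ j′. Let w_{ij} be the permutation of {1,…,n} with w_{ij}(i) = 1, w_{ij}(j) = n, and remaining values n−1, n−2, …, 2 placed in decreasing order at the remaining positions read left to right, and define w_{i′j′} analogously. Then ℓ(w_{ij}) = ℓ(w_{i′j′}) if and only if j − i = j′ − i′. -/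
open Matrix

noncomputable section

/-! A pair of positions `p < q` is a non-inversion of `w_{ij}` exactly when `p` carries the
value `1` or `q` carries the value `n`, because `w_{ij}` is decreasing on all other positions.
Counting those pairs gives `ℓ(w_{ij}) = C(n,2) - (n - i) - (j - 1) + [i < j]`, which depends only
on `d = j - i`, and `d ↦ [d > 0] - d` is injective on nonzero integers. -/

open Finset

lemma invLen_add_card_nonInversions {n : ℕ} (w : Equiv.Perm (Fin n)) :
    invLen w + #{p : Fin n × Fin n | p.1 < p.2 ∧ w p.1 < w p.2} =
      #{p : Fin n × Fin n | p.1 < p.2} := by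
  rw [invLen, ← card_filter_add_card_filter_not (s := {p : Fin n × Fin n | p.1 < p.2})
    (fun p => w p.2 < w p.1), filter_filter, filter_filter]
  congr 2
  refine filter_congr fun p _ => and_congr_right fun hlt => ⟨fun hw => hw.asymm, fun hw => ?_⟩
  exact (not_lt.mp hw).lt_of_ne (w.injective.ne hlt.ne)

lemma nonInversions_eq_of_antitone_off {n : ℕ} {w : Equiv.Perm (Fin n)} {a b : Fin n}
    (hmin : ∀ x, w a ≤ w x) (hmax : ∀ x, w x ≤ w b)
    (hanti : ∀ p q, p ≠ a → p ≠ b → q ≠ a → q ≠ b → p < q → w q < w p) :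
    ({p : Fin n × Fin n | p.1 < p.2 ∧ w p.1 < w p.2} : Finset (Fin n × Fin n)) =
      ({p : Fin n × Fin n | p.1 < p.2 ∧ (p.1 = a ∨ p.2 = b)} : Finset (Fin n × Fin n)) := by
  refine filter_congr fun ⟨p, q⟩ _ => and_congr_right fun hpq => ⟨fun hw => ?_, ?_⟩
  · by_contra! h
    obtain ⟨hpa, hqb⟩ := h
    have hqa : q ≠ a := fun hqa => (hmin p).not_gt (hqa ▸ hw)
    have hpb : p ≠ b := fun hpb => (hmax q).not_gt (hpb ▸ hw)
    exact (hanti p q hpa hpb hqa hqb hpq).asymm hw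
  · rintro (rfl | rfl)
    · exact (hmin q).lt_of_ne (w.injective.ne hpq.ne)
    · exact (hmax p).lt_of_ne (w.injective.ne hpq.ne)

lemma card_filter_lt_and_fst_eq {n : ℕ} (a : Fin n) :
    #{p : Fin n × Fin n | p.1 < p.2 ∧ p.1 = a} = n - 1 - a := by
  have : ({p : Fin n × Fin n | p.1 < p.2 ∧ p.1 = a} : Finset (Fin n × Fin n)) = {a} ×ˢ Ioi a := by
    ext ⟨p, q⟩
    simp only [mem_filter, mem_univ, true_and, mem_product, mem_singleton, mem_Ioi]
    constructor
    · rintro ⟨h, rfl⟩; exact ⟨rfl, h⟩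
    · rintro ⟨rfl, h⟩; exact ⟨h, rfl⟩
  rw [this, card_product, card_singleton, Fin.card_Ioi, one_mul]

lemma card_filter_lt_and_snd_eq {n : ℕ} (b : Fin n) :
    #{p : Fin n × Fin n | p.1 < p.2 ∧ p.2 = b} = b := by
  have : ({p : Fin n × Fin n | p.1 < p.2 ∧ p.2 = b} : Finset (Fin n × Fin n)) = Iio b ×ˢ {b} := by
    ext ⟨p, q⟩
    simp only [mem_filter, mem_univ, true_and, mem_product, mem_singleton, mem_Iio]
    constructor
    · rintro ⟨h, rfl⟩; exact ⟨h, rfl⟩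
    · rintro ⟨h, rfl⟩; exact ⟨h, rfl⟩
  rw [this, card_product, card_singleton, Fin.card_Iio, mul_one]

lemma card_filter_lt_and_fst_eq_or_snd_eq {n : ℕ} (a b : Fin n) :
    #{p : Fin n × Fin n | p.1 < p.2 ∧ (p.1 = a ∨ p.2 = b)} + (if a < b then 1 else 0) =
      (n - 1 - a) + b := by
  have hinter : #{p : Fin n × Fin n | (p.1 < p.2 ∧ p.1 = a) ∧ (p.1 < p.2 ∧ p.2 = b)} =
      if a < b then 1 else 0 := by
    split_ifs with hab
    · rw [card_eq_one]
      refine ⟨(a, b), ?_⟩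
      ext ⟨p, q⟩
      simp only [mem_filter, mem_univ, true_and, mem_singleton, Prod.mk.injEq]
      constructor
      · rintro ⟨⟨-, rfl⟩, -, rfl⟩; exact ⟨rfl, rfl⟩
      · rintro ⟨rfl, rfl⟩; exact ⟨⟨hab, rfl⟩, hab, rfl⟩
    · rw [card_eq_zero, filter_eq_empty_iff]
      rintro ⟨p, q⟩ - ⟨⟨hpq, rfl⟩, -, rfl⟩
      exact hab hpq
  rw [← card_filter_lt_and_fst_eq a, ← card_filter_lt_and_snd_eq b,
    ← card_union_add_card_inter, ← filter_or, ← filter_and, hinter]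
  simp only [and_or_left]

theorem invLen_add_eq_of_antitone_off {n : ℕ} {w : Equiv.Perm (Fin n)} {a b : Fin n}
    (hmin : ∀ x, w a ≤ w x) (hmax : ∀ x, w x ≤ w b)
    (hanti : ∀ p q, p ≠ a → p ≠ b → q ≠ a → q ≠ b → p < q → w q < w p) :
    invLen w + (n - 1 - a) + b = #{p : Fin n × Fin n | p.1 < p.2} + if a < b then 1 else 0 := by
  rw [← invLen_add_card_nonInversions w, nonInversions_eq_of_antitone_off hmin hmax hanti]
  have := card_filter_lt_and_fst_eq_or_snd_eq a b
  omega

/-- with `w_{ij}` and `w_{i′j′}` as above,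
`ℓ(w_{ij}) = ℓ(w_{i′j′})` iff `j − i = j′ − i′` (as integers). -/
theorem stmt13 (n : ℕ) (i j i' j' : ℕ)
    (hi1 : 1 ≤ i) (hin : i ≤ n) (hj1 : 1 ≤ j) (hjn : j ≤ n)
    (hi'1 : 1 ≤ i') (hi'n : i' ≤ n) (hj'1 : 1 ≤ j') (hj'n : j' ≤ n)
    (hij : i ≠ j) (hij' : i' ≠ j')
    (w : Equiv.Perm (Fin n))
    (hwi : w ⟨i - 1, by omega⟩ = ⟨0, by omega⟩)
    (hwj : w ⟨j - 1, by omega⟩ = ⟨n - 1, by omega⟩)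
    (hdec : ∀ p q : Fin n, p ≠ ⟨i - 1, by omega⟩ → p ≠ ⟨j - 1, by omega⟩ →
      q ≠ ⟨i - 1, by omega⟩ → q ≠ ⟨j - 1, by omega⟩ → p < q → w q < w p)
    (w' : Equiv.Perm (Fin n))
    (hwi' : w' ⟨i' - 1, by omega⟩ = ⟨0, by omega⟩)
    (hwj' : w' ⟨j' - 1, by omega⟩ = ⟨n - 1, by omega⟩)
    (hdec' : ∀ p q : Fin n, p ≠ ⟨i' - 1, by omega⟩ → p ≠ ⟨j' - 1, by omega⟩ →
      q ≠ ⟨i' - 1, by omega⟩ → q ≠ ⟨j' - 1, by omega⟩ → p < q → w' q < w' p) :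
    invLen w = invLen w' ↔ (j : ℤ) - (i : ℤ) = (j' : ℤ) - (i' : ℤ) := by
  have hlen := invLen_add_eq_of_antitone_off
    (fun x => by rw [hwi, Fin.le_def]; exact Nat.zero_le _)
    (fun x => by rw [hwj, Fin.le_def]; exact Nat.le_sub_one_of_lt (w x).isLt) hdec
  have hlen' := invLen_add_eq_of_antitone_off
    (fun x => by rw [hwi', Fin.le_def]; exact Nat.zero_le _)
    (fun x => by rw [hwj', Fin.le_def]; exact Nat.le_sub_one_of_lt (w' x).isLt) hdec'
  simp only [Fin.mk_lt_mk] at hlen hlen'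
  split_ifs at hlen hlen' <;> omega
end
end

section
/- Let n ≥ 2 and fix i ≠ j with 1 ≤ i, j ≤ n. Let s be a permutation of {1,…,n} with s⁻¹(1) ≤ i and s⁻¹(n) ≥ j, and suppose l = s⁻¹(n) > j and that it is not the case that (s⁻¹(1) = l−1 and l−1 = i). Then s·s_{l−1,l} > s in the Bruhat order, and the permutation s′ = s·s_{l−1,l} still satisfies s′⁻¹(1) ≤ i and s′⁻¹(n) ≥ j. (Here s_{l−1,l} is the transposition exchanging l−1 and l, applied first.) -/
open Matrix

noncomputable section

/-! Since `l = s⁻¹(n)`, we have `s(l-1) < s(l)`, so right multiplication by the adjacent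
transposition `s_{l-1,l}` creates exactly one new inversion, `(l-1, l)`, and is a Bruhat cover.
It moves `n` from position `l` to `l-1 ≥ j`, and it moves `1` only if `1` sits at `l-1 ≤ i`,
sending it to `l`, which is `≤ i` unless `l-1 = i`. -/

namespace Equiv.Perm

variable {n : ℕ}

def inversions (w : Perm (Fin n)) : Finset (Fin n × Fin n) :=
  Finset.univ.filter fun p => p.1 < p.2 ∧ w p.2 < w p.1

theorem invLen_eq_card_inversions (w : Perm (Fin n)) : invLen w = (inversions w).card := rfl

theorem swap_lt_swap_of_val_succ {a b : Fin n} (hab : (a : ℕ) + 1 = b) {p q : Fin n}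
    (hpq : p < q) (hne : (p, q) ≠ (a, b)) : swap a b p < swap a b q := by
  simp only [ne_eq, Prod.mk.injEq] at hne
  rw [Fin.lt_def] at hpq ⊢
  simp only [swap_apply_def]
  split_ifs <;> simp only [Fin.ext_iff] at * <;> omega

theorem inversions_mul_swap_of_lt {w : Perm (Fin n)} {a b : Fin n} (hab : (a : ℕ) + 1 = b)
    (hw : w a < w b) :
    inversions (w * swap a b) =
      insert (a, b) ((inversions w).map (prodCongr (swap a b) (swap a b)).toEmbedding) := by
  refine Finset.ext fun ⟨p, q⟩ => ?_
  simp only [inversions, Finset.mem_insert, Finset.mem_map_equiv, Finset.mem_filter,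
    Finset.mem_univ, true_and]
  simp only [prodCongr_symm, symm_swap, prodCongr_apply, Prod.map, mul_apply]
  constructor
  · rintro ⟨hpq, hinv⟩
    by_cases h : (p, q) = (a, b)
    · exact Or.inl h
    · exact Or.inr ⟨swap_lt_swap_of_val_succ hab hpq h, hinv⟩
  · rintro (h | ⟨hpq, hinv⟩)
    · obtain ⟨rfl, rfl⟩ := Prod.mk.inj h
      rw [swap_apply_left, swap_apply_right]
      exact ⟨Fin.lt_def.mpr (by omega), hw⟩
    · refine ⟨?_, hinv⟩
      have hne : (swap a b p, swap a b q) ≠ (a, b) := by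
        intro h
        obtain ⟨hp, hq⟩ := Prod.mk.inj h
        rw [hp, hq] at hinv
        exact hw.not_gt hinv
      simpa only [swap_apply_self] using swap_lt_swap_of_val_succ hab hpq hne

theorem invLen_mul_swap_of_lt {w : Perm (Fin n)} {a b : Fin n} (hab : (a : ℕ) + 1 = b)
    (hw : w a < w b) : invLen (w * swap a b) = invLen w + 1 := by
  have hab_notMem :
      (a, b) ∉ (inversions w).map (prodCongr (swap a b) (swap a b)).toEmbedding := by
    simp only [inversions, Finset.mem_map_equiv, Finset.mem_filter, Finset.mem_univ, true_and]
    simp only [prodCongr_symm, symm_swap, prodCongr_apply, Prod.map, swap_apply_left,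
      swap_apply_right, Fin.lt_def]
    omega
  rw [invLen_eq_card_inversions, inversions_mul_swap_of_lt hab hw,
    Finset.card_insert_of_notMem hab_notMem, Finset.card_map, invLen_eq_card_inversions]

theorem bruhatLT_mul_swap_of_lt {w : Perm (Fin n)} {a b : Fin n} (hab : (a : ℕ) + 1 = b)
    (hw : w a < w b) : BruhatLT w (w * swap a b) := by
  have hne : a ≠ b := fun h => by simp [h] at hab
  have hcov : BruhatCovers (w * swap a b) w :=
    ⟨⟨swap a b, ⟨a, b, hne, rfl⟩, by rw [mul_assoc, swap_mul_self, mul_one]⟩,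
      (invLen_mul_swap_of_lt hab hw).symm⟩
  refine ⟨Relation.ReflTransGen.single hcov, fun h => ?_⟩
  have := invLen_mul_swap_of_lt hab hw
  rw [← h] at this
  omega

end Equiv.Perm

/-- Positions are 0-based: `i0 = i−1`, `j0 = j−1`, `l0 = l−1`, so that `s_{l−1,l}` is
`swap ⟨l0−1⟩ l0`, and the excluded case `s⁻¹(1) = l−1 ∧ l−1 = i` reads
`(s⁻¹ ⟨0⟩ : ℕ) = l0 − 1 ∧ (l0 : ℕ) = i0 + 1`. -/
theorem stmt17 (n : ℕ) (hn : 2 ≤ n) (i0 j0 : Fin n)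
    (s : Equiv.Perm (Fin n))
    (h1 : s⁻¹ ⟨0, by omega⟩ ≤ i0)
    (l0 : Fin n) (hl0 : l0 = s⁻¹ ⟨n - 1, by omega⟩) (hlj : j0 < l0)
    (hne : ¬(((s⁻¹ ⟨0, by omega⟩ : Fin n) : ℕ) = (l0 : ℕ) - 1 ∧ (l0 : ℕ) = (i0 : ℕ) + 1)) :
    BruhatLT s
      (s * Equiv.swap (⟨(l0 : ℕ) - 1, by exact lt_of_le_of_lt (Nat.sub_le _ _) l0.isLt⟩ :
        Fin n) l0) ∧
    (s * Equiv.swap (⟨(l0 : ℕ) - 1, by exact lt_of_le_of_lt (Nat.sub_le _ _) l0.isLt⟩ :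
        Fin n) l0)⁻¹ ⟨0, by omega⟩ ≤ i0 ∧
    j0 ≤ (s * Equiv.swap (⟨(l0 : ℕ) - 1, by exact lt_of_le_of_lt (Nat.sub_le _ _) l0.isLt⟩ :
        Fin n) l0)⁻¹ ⟨n - 1, by omega⟩ := by
  set a : Fin n := ⟨(l0 : ℕ) - 1, lt_of_le_of_lt (Nat.sub_le _ _) l0.isLt⟩ with ha
  rw [Fin.lt_def] at hlj
  have hab : (a : ℕ) + 1 = l0 := by rw [ha, Fin.val_mk]; omega
  have hsl : s l0 = ⟨n - 1, by omega⟩ := Equiv.Perm.eq_inv_iff_eq.mp hl0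
  have hw : s a < s l0 := by
    have hne_last : s a ≠ s l0 := s.injective.ne (Fin.ne_of_val_ne (by omega))
    rw [hsl, Ne, Fin.ext_iff] at hne_last
    rw [hsl, Fin.lt_def]
    have := (s a).isLt
    dsimp only at hne_last ⊢
    omega
  have hinv (x : Fin n) : (s * Equiv.swap a l0)⁻¹ x = Equiv.swap a l0 (s⁻¹ x) := by
    rw [_root_.mul_inv_rev, Equiv.swap_inv, Equiv.Perm.mul_apply]
  refine ⟨Equiv.Perm.bruhatLT_mul_swap_of_lt hab hw, ?_, ?_⟩
  · have h0l : s⁻¹ ⟨0, by omega⟩ ≠ l0 := by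
      rw [hl0]
      exact s⁻¹.injective.ne (Fin.ne_of_val_ne (by dsimp only; omega))
    rw [hinv]
    by_cases h0a : s⁻¹ ⟨0, by omega⟩ = a
    · rw [h0a, Equiv.swap_apply_left]
      rw [h0a] at h1 hne
      rw [Fin.le_def] at h1 ⊢
      omega
    · rwa [Equiv.swap_apply_of_ne_of_ne h0a h0l]
  · rw [hinv, ← hl0, Equiv.swap_apply_right, Fin.le_def]
    omega
end
end
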